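/- For i ∈ {1,2}, let lp_i be a coherent conditional lower prevision on C_i ⊆ C(X_i) with natural extension E_i to C(X_i), and let 𝔅_i ⊆ P_∅(X_i). Then for all {i,j} = {1,2}, all gambles f_i on X_i, all B_i ∈ P_∅(X_i) and all B_j ∈ 𝔅_j: (lp1⊗lp2)(f_i | B_i ∩ B_j) = (lp1⊗lp2)(f_i | B_i) = E_i(f_i | B_i), where f_i is identified with its cylindrical extension and B_i ∩ B_j denotes the product event B_i × B_j (reading the factors in the appropriate order). -/

import Mathlib

open scoped BigOperators

namespace IPaper

variable {X : Type*}

/-- A gamble on `X`: a bounded real-valued function. -/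
def IsGamble (f : X → ℝ) : Prop := ∃ M : ℝ, ∀ x, |f x| ≤ M

/-- The indicator gamble of an event. -/
noncomputable def ind (B : Set X) : X → ℝ := Set.indicator B 1

/-- The set `G_{>0}(X)` of nonnegative nonzero gambles. -/
def Gpos (X : Type*) : Set (X → ℝ) := {f | IsGamble f ∧ 0 ≤ f ∧ f ≠ 0}

/-- A coherent set of desirable gambles. -/
structure CoherentSDG (D : Set (X → ℝ)) : Prop where
  subset_gambles : ∀ f ∈ D, IsGamble f
  d1 : ∀ f : X → ℝ, IsGamble f → 0 ≤ f → f ≠ 0 → f ∈ D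
  d2 : ∀ f ∈ D, ∀ l : ℝ, 0 < l → l • f ∈ D
  d3 : ∀ f ∈ D, ∀ g ∈ D, f + g ∈ D
  d4 : ∀ f : X → ℝ, f ≤ 0 → f ∉ D

/-- `posi A`: positive linear hull of `A`. -/
def posi (A : Set (X → ℝ)) : Set (X → ℝ) :=
  {g | ∃ (n : ℕ) (l : Fin (n + 1) → ℝ) (h : Fin (n + 1) → X → ℝ),
    (∀ i, 0 < l i) ∧ (∀ i, h i ∈ A) ∧ g = ∑ i, l i • h i}

/-- `E(A) := posi (A ∪ G_{>0}(X))`. -/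
def natExtSet (A : Set (X → ℝ)) : Set (X → ℝ) := posi (A ∪ Gpos X)

/-- `C(X)`: all pairs of a gamble and a nonempty event. -/
def domC (X : Type*) : Set ((X → ℝ) × Set X) := {p | IsGamble p.1 ∧ p.2.Nonempty}

/-- The conditional lower prevision `lp_D` derived from a set of gambles `D`. -/
noncomputable def lpOf (D : Set (X → ℝ)) (f : X → ℝ) (B : Set X) : EReal :=
  sSup (Real.toEReal '' {m : ℝ | (fun x => (f x - m) * ind B x) ∈ D})

/-- Coherence (Williams) of a conditional lower prevision on a domain `C`. -/
def Coherent (C : Set ((X → ℝ) × Set X)) (lp : (X → ℝ) → Set X → EReal) : Prop :=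
  ∃ D : Set (X → ℝ), CoherentSDG D ∧ ∀ p ∈ C, lp p.1 p.2 = lpOf D p.1 p.2

/-- The set `A_lp`. -/
def Alp (C : Set ((X → ℝ) × Set X)) (lp : (X → ℝ) → Set X → EReal) : Set (X → ℝ) :=
  {g | ∃ p ∈ C, ∃ m : ℝ, (m : EReal) < lp p.1 p.2 ∧ g = fun x => (p.1 x - m) * ind p.2 x}

/-- `E(lp) := E(A_lp)`. -/
def ElpSet (C : Set ((X → ℝ) × Set X)) (lp : (X → ℝ) → Set X → EReal) : Set (X → ℝ) :=
  natExtSet (Alp C lp)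

/-- The natural extension of `lp` to all of `C(X)`. -/
noncomputable def natExtLP (C : Set ((X → ℝ) × Set X)) (lp : (X → ℝ) → Set X → EReal)
    (f : X → ℝ) (B : Set X) : EReal :=
  lpOf (ElpSet C lp) f B

/-- Simple `B`-measurable gamble. -/
def SimpleMeas (Bfam : Set (Set X)) (g : X → ℝ) : Prop :=
  ∃ (c0 : ℝ) (n : ℕ) (c : Fin n → ℝ) (Bs : Fin n → Set X),
    0 ≤ c0 ∧ (∀ i, 0 ≤ c i) ∧ (∀ i, Bs i ∈ Bfam) ∧
    g = fun x => c0 + ∑ i, c i * ind (Bs i) x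

/-- `B`-measurable gamble: uniform limit of nonnegative simple `B`-measurable gambles. -/
def BMeas (Bfam : Set (Set X)) (g : X → ℝ) : Prop :=
  ∃ gs : ℕ → X → ℝ, (∀ n, 0 ≤ gs n ∧ SimpleMeas Bfam (gs n)) ∧
    TendstoUniformly gs g Filter.atTop

/-- A conditional linear prevision on `C(X)`: a coherent self-conjugate conditional
lower prevision on the full domain. -/
def CondLinPrev (P : (X → ℝ) → Set X → EReal) : Prop :=
  Coherent (domC X) P ∧ ∀ p ∈ domC X, P p.1 p.2 = -P (-p.1) p.2

section Product

variable {X1 X2 : Type*}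

/-- `A_{1→2}`. -/
def A12 (D2 : Set (X2 → ℝ)) (F1 : Set (Set X1)) : Set (X1 × X2 → ℝ) :=
  {g | ∃ f2 ∈ D2, ∃ B1 ∈ F1 ∪ {Set.univ}, g = fun p => f2 p.2 * ind B1 p.1}

/-- `A_{2→1}`. -/
def A21 (D1 : Set (X1 → ℝ)) (F2 : Set (Set X2)) : Set (X1 × X2 → ℝ) :=
  {g | ∃ f1 ∈ D1, ∃ B2 ∈ F2 ∪ {Set.univ}, g = fun p => f1 p.1 * ind B2 p.2}

/-- `D1 ⊗ D2`, relative to the families of conditioning events `F1`, `F2`. -/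
def indNatExt (D1 : Set (X1 → ℝ)) (D2 : Set (X2 → ℝ))
    (F1 : Set (Set X1)) (F2 : Set (Set X2)) : Set (X1 × X2 → ℝ) :=
  natExtSet (A12 D2 F1 ∪ A21 D1 F2)

/-- `marg_1(D)`. -/
def marg1 (D : Set (X1 × X2 → ℝ)) : Set (X1 → ℝ) :=
  {f | IsGamble f ∧ (fun p : X1 × X2 => f p.1) ∈ D}

/-- `marg_2(D)`. -/
def marg2 (D : Set (X1 × X2 → ℝ)) : Set (X2 → ℝ) :=
  {f | IsGamble f ∧ (fun p : X1 × X2 => f p.2) ∈ D}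

/-- `marg_1(D|B2)`. -/
def marg1c (D : Set (X1 × X2 → ℝ)) (B2 : Set X2) : Set (X1 → ℝ) :=
  {f | IsGamble f ∧ (fun p : X1 × X2 => f p.1 * ind B2 p.2) ∈ D}

/-- `marg_2(D|B1)`. -/
def marg2c (D : Set (X1 × X2 → ℝ)) (B1 : Set X1) : Set (X2 → ℝ) :=
  {f | IsGamble f ∧ (fun p : X1 × X2 => f p.2 * ind B1 p.1) ∈ D}

/-- Epistemic independence of a set of desirable gambles on `X1 × X2`. -/
def EpIndSDG (F1 : Set (Set X1)) (F2 : Set (Set X2)) (D : Set (X1 × X2 → ℝ)) : Prop :=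
  (∀ B2 ∈ F2, marg1c D B2 = marg1 D) ∧ (∀ B1 ∈ F1, marg2c D B1 = marg2 D)

/-- Independent product (of sets of desirable gambles). -/
def IndProductSDG (F1 : Set (Set X1)) (F2 : Set (Set X2))
    (D1 : Set (X1 → ℝ)) (D2 : Set (X2 → ℝ)) (D : Set (X1 × X2 → ℝ)) : Prop :=
  CoherentSDG D ∧ EpIndSDG F1 F2 D ∧ marg1 D = D1 ∧ marg2 D = D2

/-- The independent natural extension `lp1 ⊗ lp2` on `C(X1 × X2)`. -/
noncomputable def lpProd (C1 : Set ((X1 → ℝ) × Set X1)) (lp1 : (X1 → ℝ) → Set X1 → EReal)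
    (C2 : Set ((X2 → ℝ) × Set X2)) (lp2 : (X2 → ℝ) → Set X2 → EReal)
    (F1 : Set (Set X1)) (F2 : Set (Set X2)) :
    (X1 × X2 → ℝ) → Set (X1 × X2) → EReal :=
  lpOf (indNatExt (ElpSet C1 lp1) (ElpSet C2 lp2) F1 F2)

/-- An independent domain `C ⊆ C(X1 × X2)`. -/
def IndepDomain (F1 : Set (Set X1)) (F2 : Set (Set X2))
    (C : Set ((X1 × X2 → ℝ) × Set (X1 × X2))) : Prop :=
  (∀ (f1 : X1 → ℝ) (B1 : Set X1), IsGamble f1 → B1.Nonempty → ∀ B2 ∈ F2,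
    (((fun p : X1 × X2 => f1 p.1), B1 ×ˢ (Set.univ : Set X2)) ∈ C ↔
      ((fun p : X1 × X2 => f1 p.1), B1 ×ˢ B2) ∈ C)) ∧
  (∀ (f2 : X2 → ℝ) (B2 : Set X2), IsGamble f2 → B2.Nonempty → ∀ B1 ∈ F1,
    (((fun p : X1 × X2 => f2 p.2), (Set.univ : Set X1) ×ˢ B2) ∈ C ↔
      ((fun p : X1 × X2 => f2 p.2), B1 ×ˢ B2) ∈ C))

/-- Epistemic independence of a conditional lower prevision on a domain `C`. -/
def EpIndLP (F1 : Set (Set X1)) (F2 : Set (Set X2))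
    (C : Set ((X1 × X2 → ℝ) × Set (X1 × X2)))
    (lp : (X1 × X2 → ℝ) → Set (X1 × X2) → EReal) : Prop :=
  (∀ (f1 : X1 → ℝ) (B1 : Set X1), IsGamble f1 → B1.Nonempty →
    ((fun p : X1 × X2 => f1 p.1), B1 ×ˢ (Set.univ : Set X2)) ∈ C → ∀ B2 ∈ F2,
    lp (fun p : X1 × X2 => f1 p.1) (B1 ×ˢ (Set.univ : Set X2)) =
      lp (fun p : X1 × X2 => f1 p.1) (B1 ×ˢ B2)) ∧
  (∀ (f2 : X2 → ℝ) (B2 : Set X2), IsGamble f2 → B2.Nonempty →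
    ((fun p : X1 × X2 => f2 p.2), (Set.univ : Set X1) ×ˢ B2) ∈ C → ∀ B1 ∈ F1,
    lp (fun p : X1 × X2 => f2 p.2) ((Set.univ : Set X1) ×ˢ B2) =
      lp (fun p : X1 × X2 => f2 p.2) (B1 ×ˢ B2))

/-- Independent product of two conditional lower previsions, on the joint domain `C`. -/
def IndProductLP (F1 : Set (Set X1)) (F2 : Set (Set X2))
    (C1 : Set ((X1 → ℝ) × Set X1)) (lp1 : (X1 → ℝ) → Set X1 → EReal)
    (C2 : Set ((X2 → ℝ) × Set X2)) (lp2 : (X2 → ℝ) → Set X2 → EReal)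
    (C : Set ((X1 × X2 → ℝ) × Set (X1 × X2)))
    (lp : (X1 × X2 → ℝ) → Set (X1 × X2) → EReal) : Prop :=
  Coherent C lp ∧ EpIndLP F1 F2 C lp ∧
  (∀ p ∈ C1, lp (fun q : X1 × X2 => p.1 q.1) (p.2 ×ˢ (Set.univ : Set X2)) = lp1 p.1 p.2) ∧
  (∀ p ∈ C2, lp (fun q : X1 × X2 => p.1 q.2) ((Set.univ : Set X1) ×ˢ p.2) = lp2 p.1 p.2)

end Product

/-!
Only `lp1 ⊗ lp2 ≤ E1` needs an argument. If `f(x1) 1_B(x2)` is a positive combination of gambles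
`a(x2) 1_A(x1)` with `a ∈ D2`, `b(x1) 1_C(x2)` with `b ∈ D1`, and a nonnegative gamble, then for
each fixed `x1` the gamble `f(x1) 1_B - ∑ b_i(x1) 1_{C_i}` on `X2` lies in `D2 ∪ {0}`. Extend `D2`
by Zorn's lemma to a complete coherent set `M`; relative to `η = 1_B + ∑ 1_{C_i}` it induces a
positive linear functional `P` with `P η = 1`. Applying `P` to every section yields
`P(1_B) f ≥ ∑ P(1_{C_i}) b_i`, so `f ∈ D1 ∪ {0}`; the case `P(1_B) = 0` would put a nonpositive
gamble in `D1`. The statement for the second factor follows by swapping the factors.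
-/

section Gambles

variable {W : Type*}

lemma IsGamble.add {f g : W → ℝ} (hf : IsGamble f) (hg : IsGamble g) : IsGamble (f + g) := by
  obtain ⟨M, hM⟩ := hf
  obtain ⟨N, hN⟩ := hg
  exact ⟨M + N, fun x => (abs_add_le _ _).trans (add_le_add (hM x) (hN x))⟩

lemma IsGamble.smul {f : W → ℝ} (hf : IsGamble f) (c : ℝ) : IsGamble (c • f) := by
  obtain ⟨M, hM⟩ := hf
  exact ⟨|c| * M, fun x => by
    simpa [abs_mul] using mul_le_mul_of_nonneg_left (hM x) (abs_nonneg c)⟩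

lemma IsGamble.neg {f : W → ℝ} (hf : IsGamble f) : IsGamble (-f) := by
  simpa using hf.smul (-1)

lemma IsGamble.sub {f g : W → ℝ} (hf : IsGamble f) (hg : IsGamble g) : IsGamble (f - g) := by
  simpa [sub_eq_add_neg] using hf.add hg.neg

lemma IsGamble.mul {f g : W → ℝ} (hf : IsGamble f) (hg : IsGamble g) : IsGamble (f * g) := by
  obtain ⟨M, hM⟩ := hf
  obtain ⟨N, hN⟩ := hg
  exact ⟨M * N, fun x => by
    simpa [abs_mul] using mul_le_mul (hM x) (hN x) (abs_nonneg _) ((abs_nonneg _).trans (hM x))⟩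

lemma IsGamble.comp {V : Type*} {f : W → ℝ} (hf : IsGamble f) (φ : V → W) : IsGamble (f ∘ φ) :=
  let ⟨M, hM⟩ := hf
  ⟨M, fun x => hM (φ x)⟩

lemma isGamble_const (c : ℝ) : IsGamble (fun _ : W => c) := ⟨|c|, fun _ => le_rfl⟩

lemma isGamble_sum {ι : Type*} (s : Finset ι) {f : ι → W → ℝ} (hf : ∀ i ∈ s, IsGamble (f i)) :
    IsGamble (∑ i ∈ s, f i) :=
  Finset.sum_induction f IsGamble (fun _ _ => IsGamble.add) (isGamble_const 0) hf

lemma ind_nonneg (B : Set W) : 0 ≤ ind B :=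
  Set.indicator_nonneg fun _ _ => zero_le_one

lemma ind_le_one (B : Set W) (x : W) : ind B x ≤ 1 :=
  Set.indicator_le_self' (fun _ _ => zero_le_one) x

lemma ind_of_mem {B : Set W} {x : W} (h : x ∈ B) : ind B x = 1 := by simp [ind, h]

lemma isGamble_ind (B : Set W) : IsGamble (ind B) :=
  ⟨1, fun x => by rw [abs_of_nonneg (ind_nonneg B x)]; exact ind_le_one B x⟩

lemma ind_ne_zero {B : Set W} (hB : B.Nonempty) : ind B ≠ 0 := fun h => by
  obtain ⟨x, hx⟩ := hB
  simpa [ind_of_mem hx] using congrFun h x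

lemma ind_prod {W' : Type*} (B : Set W) (B' : Set W') (p : W × W') :
    ind (B ×ˢ B') p = ind B p.1 * ind B' p.2 :=
  Set.indicator_prod_one

end Gambles

section Posi

variable {W : Type*} {A : Set (W → ℝ)}

lemma subset_posi : A ⊆ posi A := fun h hh =>
  ⟨0, fun _ => 1, fun _ => h, fun _ => one_pos, fun _ => hh, by simp⟩

lemma posi_smul {g : W → ℝ} (hg : g ∈ posi A) {c : ℝ} (hc : 0 < c) : c • g ∈ posi A := by
  obtain ⟨n, l, h, hl, hh, rfl⟩ := hg
  exact ⟨n, fun i => c * l i, h, fun i => mul_pos hc (hl i), hh,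
    by simp [Finset.smul_sum, smul_smul]⟩

lemma posi_add {g g' : W → ℝ} (hg : g ∈ posi A) (hg' : g' ∈ posi A) : g + g' ∈ posi A := by
  obtain ⟨n, l, h, hl, hh, rfl⟩ := hg
  obtain ⟨n', l', h', hl', hh', rfl⟩ := hg'
  refine ⟨n + 1 + n', (Fin.append l l' : Fin (n + 1 + (n' + 1)) → ℝ),
    (Fin.append h h' : Fin (n + 1 + (n' + 1)) → W → ℝ), fun (i : Fin (n + 1 + (n' + 1))) => ?_,
    fun (i : Fin (n + 1 + (n' + 1))) => ?_, ?_⟩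
  · exact Fin.addCases (by simpa using hl) (by simpa using hl') i
  · exact Fin.addCases (by simpa using hh) (by simpa using hh') i
  · change _ = ∑ i : Fin (n + 1 + (n' + 1)), Fin.append l l' i • Fin.append h h' i
    simp [Fin.sum_univ_add]

lemma posi_comp {V : Type*} {g : W → ℝ} (hg : g ∈ posi A) {A' : Set (V → ℝ)} (φ : V → W)
    (hA : ∀ h ∈ A, h ∘ φ ∈ A') : g ∘ φ ∈ posi A' := by
  obtain ⟨n, l, h, hl, hh, rfl⟩ := hg
  exact ⟨n, l, fun i => h i ∘ φ, hl, fun i => hA _ (hh i), by ext; simp⟩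

end Posi

namespace CoherentSDG

variable {W : Type*} {D : Set (W → ℝ)}

lemma zero_not_mem (hD : CoherentSDG D) : (0 : W → ℝ) ∉ D := hD.d4 0 le_rfl

lemma isGamble_of_mem_insert_zero (hD : CoherentSDG D) {a : W → ℝ} (ha : a ∈ insert 0 D) :
    IsGamble a := by
  rcases ha with rfl | ha
  · exact isGamble_const 0
  · exact hD.subset_gambles a ha

lemma mem_insert_zero_of_nonneg (hD : CoherentSDG D) {a : W → ℝ} (ha : IsGamble a)
    (h0 : 0 ≤ a) : a ∈ insert 0 D := by
  by_cases ha0 : a = 0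
  · exact Or.inl ha0
  · exact Or.inr (hD.d1 a ha h0 ha0)

lemma add_mem_of_mem_insert_zero (hD : CoherentSDG D) {a b : W → ℝ} (ha : a ∈ D)
    (hb : b ∈ insert 0 D) : a + b ∈ D := by
  rcases hb with rfl | hb
  · simpa using ha
  · exact hD.d3 a ha b hb

lemma add_mem_insert_zero (hD : CoherentSDG D) {a b : W → ℝ} (ha : a ∈ insert 0 D)
    (hb : b ∈ insert 0 D) : a + b ∈ insert 0 D := by
  rcases ha with rfl | ha
  · simpa using hb
  · exact Or.inr (hD.add_mem_of_mem_insert_zero ha hb)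

lemma smul_mem_insert_zero (hD : CoherentSDG D) {a : W → ℝ} (ha : a ∈ insert 0 D) {c : ℝ}
    (hc : 0 ≤ c) : c • a ∈ insert 0 D := by
  rcases hc.eq_or_lt with rfl | hc
  · simp
  rcases ha with rfl | ha
  · simp
  · exact Or.inr (hD.d2 a ha c hc)

lemma sum_mem_insert_zero (hD : CoherentSDG D) {ι : Type*} (s : Finset ι) {a : ι → W → ℝ}
    (ha : ∀ i ∈ s, a i ∈ insert 0 D) : ∑ i ∈ s, a i ∈ insert 0 D :=
  Finset.sum_induction a (· ∈ insert 0 D) (fun _ _ => hD.add_mem_insert_zero)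
    (Set.mem_insert 0 D) ha

lemma sum_mem (hD : CoherentSDG D) {ι : Type*} {s : Finset ι} {a : ι → W → ℝ}
    (ha : ∀ i ∈ s, a i ∈ insert 0 D) {j : ι} (hj : j ∈ s) (haj : a j ∈ D) : ∑ i ∈ s, a i ∈ D := by
  classical
  rw [← Finset.add_sum_erase s a hj]
  exact hD.add_mem_of_mem_insert_zero haj
    (hD.sum_mem_insert_zero _ fun i hi => ha i (Finset.mem_of_mem_erase hi))

lemma eq_zero_of_neg_mem_insert_zero (hD : CoherentSDG D) {a : W → ℝ} (ha : a ∈ insert 0 D)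
    (hna : -a ∈ insert 0 D) : a = 0 := by
  rcases ha with rfl | ha
  · rfl
  · exact absurd (hD.add_mem_of_mem_insert_zero ha hna) (by simpa using hD.zero_not_mem)

lemma posi_subset (hD : CoherentSDG D) {A : Set (W → ℝ)} (hA : A ⊆ D) : posi A ⊆ D := by
  rintro _ ⟨n, l, h, hl, hh, rfl⟩
  have hterm : ∀ i, l i • h i ∈ D := fun i => hD.d2 _ (hA (hh i)) _ (hl i)
  exact hD.sum_mem (fun i _ => Or.inr (hterm i)) (Finset.mem_univ 0) (hterm 0)

lemma gpos_subset (hD : CoherentSDG D) : Gpos W ⊆ D := fun f hf => hD.d1 f hf.1 hf.2.1 hf.2.2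

lemma natExtSet_subset (hD : CoherentSDG D) {A : Set (W → ℝ)} (hA : A ⊆ D) : natExtSet A ⊆ D :=
  hD.posi_subset (Set.union_subset hA hD.gpos_subset)

lemma of_subset_natExtSet {A : Set (W → ℝ)} (hD : CoherentSDG D) (hA : A ⊆ D) :
    CoherentSDG (natExtSet A) where
  subset_gambles f hf := hD.subset_gambles f (hD.natExtSet_subset hA hf)
  d1 _ hf h0 hne := subset_posi (Or.inr ⟨hf, h0, hne⟩)
  d2 _ hf _ hl := posi_smul hf hl
  d3 _ hf _ hg := posi_add hf hg
  d4 _ hf hmem := hD.d4 _ hf (hD.natExtSet_subset hA hmem)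

end CoherentSDG

section Extension

variable {W : Type*} {C : Set ((W → ℝ) × Set W)} {lp : (W → ℝ) → Set W → EReal}

lemma Alp_subset {D : Set (W → ℝ)} (hD : CoherentSDG D)
    (hlp : ∀ p ∈ C, lp p.1 p.2 = lpOf D p.1 p.2) : Alp C lp ⊆ D := by
  rintro _ ⟨p, hp, m, hm, rfl⟩
  rw [hlp p hp] at hm
  obtain ⟨_, ⟨μ, hμ, rfl⟩, hmμ⟩ := lt_sSup_iff.mp hm
  have hmμ : m < μ := EReal.coe_lt_coe_iff.mp hmμ
  have hsplit : (fun x => (p.1 x - m) * ind p.2 x)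
      = (fun x => (p.1 x - μ) * ind p.2 x) + (μ - m) • ind p.2 := by
    ext x; simp only [Pi.add_apply, Pi.smul_apply, smul_eq_mul]; ring
  rw [hsplit]
  exact hD.add_mem_of_mem_insert_zero hμ (hD.mem_insert_zero_of_nonneg ((isGamble_ind _).smul _)
    (smul_nonneg (sub_nonneg.mpr hmμ.le) (ind_nonneg _)))

lemma coherentSDG_ElpSet (hlp : Coherent C lp) : CoherentSDG (ElpSet C lp) :=
  let ⟨_, hD, hlpD⟩ := hlp
  hD.of_subset_natExtSet (Alp_subset hD hlpD)

end Extension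

section Totality

variable {W : Type*}

lemma coherentSDG_sUnion {c : Set (Set (W → ℝ))} (hc : ∀ D ∈ c, CoherentSDG D)
    (hchain : IsChain (· ⊆ ·) c) (hne : c.Nonempty) : CoherentSDG (⋃₀ c) where
  subset_gambles := by
    rintro f ⟨D, hD, hf⟩
    exact (hc D hD).subset_gambles f hf
  d1 f hf h0 hne' := by
    obtain ⟨D, hD⟩ := hne
    exact ⟨D, hD, (hc D hD).d1 f hf h0 hne'⟩
  d2 := by
    rintro f ⟨D, hD, hf⟩ l hl
    exact ⟨D, hD, (hc D hD).d2 f hf l hl⟩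
  d3 := by
    rintro f ⟨D, hD, hf⟩ g ⟨D', hD', hg⟩
    rcases hchain.total hD hD' with h | h
    · exact ⟨D', hD', (hc D' hD').d3 f (h hf) g hg⟩
    · exact ⟨D, hD, (hc D hD).d3 f hf g (h hg)⟩
  d4 := by
    rintro f hf ⟨D, hD, hfD⟩
    exact (hc D hD).d4 f hf hfD

/-- For coherent `M` and `-g ∉ M ∪ {0}`, this is the natural extension of `M ∪ {g}`. -/
def extendBy (M : Set (W → ℝ)) (g : W → ℝ) : Set (W → ℝ) :=
  {h | IsGamble h ∧ h ≠ 0 ∧ ∃ a : ℝ, 0 ≤ a ∧ h - a • g ∈ insert 0 M}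

lemma coherentSDG_extendBy {M : Set (W → ℝ)} (hM : CoherentSDG M) {g : W → ℝ}
    (hng : -g ∉ insert 0 M) : CoherentSDG (extendBy M g) := by
  have neg_g : ∀ a : ℝ, 0 < a → -(a • g) ∉ insert 0 M := fun a ha hmem => hng <| by
    simpa [smul_smul, inv_mul_cancel₀ ha.ne'] using
      hM.smul_mem_insert_zero hmem (inv_nonneg.mpr ha.le)
  refine ⟨fun _ hh => hh.1, fun h hh h0 hne => ⟨hh, hne, 0, le_rfl, by
    simpa using hM.mem_insert_zero_of_nonneg hh h0⟩, ?_, ?_, ?_⟩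
  · rintro h ⟨hh, hne, a, ha, hmem⟩ c hc
    refine ⟨hh.smul c, smul_ne_zero hc.ne' hne, c * a, mul_nonneg hc.le ha, ?_⟩
    simpa [smul_sub, smul_smul] using hM.smul_mem_insert_zero hmem hc.le
  · rintro h ⟨hh, hne, a, ha, hmem⟩ h' ⟨hh', -, a', ha', hmem'⟩
    have hsum : (h + h') - (a + a') • g ∈ insert 0 M := by
      simpa [add_smul, sub_add_sub_comm] using hM.add_mem_insert_zero hmem hmem'
    refine ⟨hh.add hh', fun h0 => ?_, a + a', add_nonneg ha ha', hsum⟩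
    rcases (add_nonneg ha ha').eq_or_lt with haa | haa
    · obtain ⟨rfl, rfl⟩ : a = 0 ∧ a' = 0 := ⟨by linarith, by linarith⟩
      refine hne (hM.eq_zero_of_neg_mem_insert_zero (by simpa using hmem) ?_)
      simpa [neg_eq_of_add_eq_zero_right h0] using hmem'
    · exact neg_g _ haa (by simpa [h0] using hsum)
  · rintro h hle ⟨hh, hne, a, ha, hmem⟩
    have hnh : -h ∈ insert 0 M := hM.mem_insert_zero_of_nonneg hh.neg (neg_nonneg.mpr hle)
    rcases ha.eq_or_lt with rfl | ha
    · exact hne (hM.eq_zero_of_neg_mem_insert_zero (by simpa using hmem) hnh)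
    · exact neg_g a ha (by convert hM.add_mem_insert_zero hmem hnh using 1; abel)

lemma CoherentSDG.exists_total_superset {D : Set (W → ℝ)} (hD : CoherentSDG D) :
    ∃ M, CoherentSDG M ∧ D ⊆ M ∧ ∀ g, IsGamble g → g ∈ M ∨ -g ∈ insert 0 M := by
  obtain ⟨M, hDM, hmax⟩ := zorn_subset_nonempty {E | CoherentSDG E ∧ D ⊆ E}
    (fun c hc hchain hne => ⟨⋃₀ c, ⟨coherentSDG_sUnion (fun E hE => (hc hE).1) hchain hne,
      hne.elim fun E hE => (hc hE).2.trans (Set.subset_sUnion_of_mem hE)⟩,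
      fun _ => Set.subset_sUnion_of_mem⟩) D ⟨hD, le_rfl⟩
  have hM := hmax.prop.1
  refine ⟨M, hM, hDM, fun g hg => or_iff_not_imp_right.mpr fun hng => ?_⟩
  have hg0 : g ≠ 0 := fun h => hng (by simp [h])
  have hMext : M ⊆ extendBy M g :=
    fun h hh => ⟨hM.subset_gambles h hh, fun h0 => hM.zero_not_mem (h0 ▸ hh), 0, le_rfl,
      by simp [hh]⟩
  exact hmax.2 ⟨coherentSDG_extendBy hM hng, hDM.trans hMext⟩ hMext ⟨hg, hg0, 1, zero_le_one, by simp⟩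

end Totality

section LowerPrevAlong

variable {Z : Type*}

def boundedBy (η : Z → ℝ) : Submodule ℝ (Z → ℝ) where
  carrier := {ξ | ∃ c : ℝ, ∀ z, |ξ z| ≤ c * η z}
  add_mem' := by
    rintro ξ ξ' ⟨c, hc⟩ ⟨c', hc'⟩
    exact ⟨c + c', fun z => (abs_add_le _ _).trans (by linarith [hc z, hc' z])⟩
  zero_mem' := ⟨0, fun z => by simp⟩
  smul_mem' := by
    rintro a ξ ⟨c, hc⟩
    exact ⟨|a| * c, fun z => by
      simpa [abs_mul, mul_assoc] using mul_le_mul_of_nonneg_left (hc z) (abs_nonneg a)⟩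

lemma mem_boundedBy_of_le {η u : Z → ℝ} (h0 : 0 ≤ u) (hle : u ≤ η) : u ∈ boundedBy η :=
  ⟨1, fun z => by simpa [abs_of_nonneg (h0 z)] using hle z⟩

lemma IsGamble.of_mem_boundedBy {η ξ : Z → ℝ} (hη : IsGamble η) (hξ : ξ ∈ boundedBy η) :
    IsGamble ξ := by
  obtain ⟨c, hc⟩ := hξ
  obtain ⟨N, hN⟩ := hη
  refine ⟨|c| * N, fun z => (hc z).trans ((le_abs_self _).trans ?_)⟩
  rw [abs_mul]
  exact mul_le_mul_of_nonneg_left (hN z) (abs_nonneg c)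

/-- For complete `M` this is linear on `boundedBy η`: it reads off the top lexicographic layer of
`M` as seen from `η`. -/
noncomputable def lowerPrevAlong (M : Set (Z → ℝ)) (η ξ : Z → ℝ) : ℝ :=
  sSup {μ : ℝ | ξ - μ • η ∈ M}

variable {M : Set (Z → ℝ)} {η ξ ξ' : Z → ℝ} {μ : ℝ}

lemma le_of_sub_smul_mem (hM : CoherentSDG M) (hη0 : 0 ≤ η) {ν : ℝ} (hν : ξ - ν • η ∈ M)
    (hle : ∀ z, ξ z ≤ μ * η z) : ν ≤ μ := by
  by_contra! hlt
  refine hM.d4 _ (fun z => ?_) hν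
  have := hle z
  have : 0 ≤ η z := hη0 z
  simp only [Pi.sub_apply, Pi.smul_apply, smul_eq_mul, Pi.zero_apply]
  nlinarith

lemma bddAbove_setOf_sub_smul_mem (hM : CoherentSDG M) (hη0 : 0 ≤ η) (hξ : ξ ∈ boundedBy η) :
    BddAbove {μ : ℝ | ξ - μ • η ∈ M} :=
  let ⟨c, hc⟩ := hξ
  ⟨c, fun _ hν => le_of_sub_smul_mem hM hη0 hν fun z => (le_abs_self _).trans (hc z)⟩

lemma nonempty_setOf_sub_smul_mem (hM : CoherentSDG M) (hη : η ∈ M) (hξ : ξ ∈ boundedBy η) :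
    {μ : ℝ | ξ - μ • η ∈ M}.Nonempty := by
  obtain ⟨c, hc⟩ := id hξ
  have hsplit : ξ - (-(c + 1)) • η = η + (ξ + c • η) := by
    ext z; simp only [Pi.add_apply, Pi.sub_apply, Pi.smul_apply, smul_eq_mul]; ring
  refine ⟨-(c + 1), ?_⟩
  change ξ - _ • η ∈ M
  rw [hsplit]
  have hgamble : IsGamble ξ := (hM.subset_gambles η hη).of_mem_boundedBy hξ
  refine hM.add_mem_of_mem_insert_zero hη (hM.mem_insert_zero_of_nonneg
    (hgamble.add ((hM.subset_gambles η hη).smul c)) fun z => ?_)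
  simp only [Pi.add_apply, Pi.smul_apply, smul_eq_mul, Pi.zero_apply]
  linarith [neg_abs_le (ξ z), hc z]

lemma lowerPrevAlong_le (hM : CoherentSDG M) (hη : η ∈ M) (hη0 : 0 ≤ η) (hξ : ξ ∈ boundedBy η)
    (hle : ∀ z, ξ z ≤ μ * η z) : lowerPrevAlong M η ξ ≤ μ :=
  csSup_le (nonempty_setOf_sub_smul_mem hM hη hξ) fun _ hν => le_of_sub_smul_mem hM hη0 hν hle

lemma le_lowerPrevAlong (hM : CoherentSDG M) (hη0 : 0 ≤ η) (hξ : ξ ∈ boundedBy η)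
    (hmem : ξ - μ • η ∈ M) : μ ≤ lowerPrevAlong M η ξ :=
  le_csSup (bddAbove_setOf_sub_smul_mem hM hη0 hξ) hmem

lemma sub_smul_mem_of_lt (hM : CoherentSDG M) (hη : η ∈ M) (hξ : ξ ∈ boundedBy η)
    (hlt : μ < lowerPrevAlong M η ξ) : ξ - μ • η ∈ M := by
  obtain ⟨ν, hν, hμν⟩ := exists_lt_of_lt_csSup (nonempty_setOf_sub_smul_mem hM hη hξ) hlt
  have hsplit : ξ - μ • η = (ξ - ν • η) + (ν - μ) • η := by
    ext z; simp only [Pi.add_apply, Pi.sub_apply, Pi.smul_apply, smul_eq_mul]; ring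
  rw [hsplit]
  exact hM.d3 _ hν _ (hM.d2 η hη _ (sub_pos.mpr hμν))

lemma le_lowerPrevAlong_of_mem_insert_zero (hM : CoherentSDG M) (hη : η ∈ M) (hη0 : 0 ≤ η)
    (hξ : ξ ∈ boundedBy η) (hmem : ξ - μ • η ∈ insert 0 M) : μ ≤ lowerPrevAlong M η ξ := by
  refine le_of_forall_lt_imp_le_of_dense fun ν hν => le_lowerPrevAlong hM hη0 hξ ?_
  have hsplit : ξ - ν • η = (μ - ν) • η + (ξ - μ • η) := by
    ext z; simp only [Pi.add_apply, Pi.sub_apply, Pi.smul_apply, smul_eq_mul]; ring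
  rw [hsplit]
  exact hM.add_mem_of_mem_insert_zero (hM.d2 η hη _ (sub_pos.mpr hν)) hmem

lemma lowerPrevAlong_nonneg (hM : CoherentSDG M) (hη : η ∈ M) (hη0 : 0 ≤ η)
    (hξ : ξ ∈ boundedBy η) (hξM : ξ ∈ insert 0 M) : 0 ≤ lowerPrevAlong M η ξ :=
  le_lowerPrevAlong_of_mem_insert_zero hM hη hη0 hξ (by simpa using hξM)

lemma lowerPrevAlong_self (hM : CoherentSDG M) (hη : η ∈ M) (hη0 : 0 ≤ η) :
    lowerPrevAlong M η η = 1 :=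
  have hηη : η ∈ boundedBy η := mem_boundedBy_of_le hη0 le_rfl
  le_antisymm (lowerPrevAlong_le hM hη hη0 hηη fun z => by simp)
    (le_lowerPrevAlong_of_mem_insert_zero hM hη hη0 hηη (by simp))

lemma add_le_lowerPrevAlong_add (hM : CoherentSDG M) (hη : η ∈ M) (hη0 : 0 ≤ η)
    (hξ : ξ ∈ boundedBy η) (hξ' : ξ' ∈ boundedBy η) :
    lowerPrevAlong M η ξ + lowerPrevAlong M η ξ' ≤ lowerPrevAlong M η (ξ + ξ') := by
  refine le_of_forall_lt_imp_le_of_dense fun ν hν => ?_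
  set a := lowerPrevAlong M η ξ - (lowerPrevAlong M η ξ + lowerPrevAlong M η ξ' - ν) / 2 with ha
  have hsplit : ξ + ξ' - ν • η = (ξ - a • η) + (ξ' - (ν - a) • η) := by
    ext z; simp only [Pi.add_apply, Pi.sub_apply, Pi.smul_apply, smul_eq_mul]; ring
  refine le_lowerPrevAlong hM hη0 (add_mem hξ hξ') ?_
  rw [hsplit]
  exact hM.d3 _ (sub_smul_mem_of_lt hM hη hξ (by linarith))
    _ (sub_smul_mem_of_lt hM hη hξ' (by linarith))

lemma mul_le_lowerPrevAlong_smul (hM : CoherentSDG M) (hη : η ∈ M) (hη0 : 0 ≤ η)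
    (hξ : ξ ∈ boundedBy η) {c : ℝ} (hc : 0 < c) :
    c * lowerPrevAlong M η ξ ≤ lowerPrevAlong M η (c • ξ) := by
  refine le_of_forall_lt_imp_le_of_dense fun ν hν => le_lowerPrevAlong hM hη0
    (Submodule.smul_mem _ c hξ) ?_
  have hmem := sub_smul_mem_of_lt hM hη hξ (μ := ν / c) (by rwa [div_lt_iff₀' hc])
  convert hM.d2 _ hmem c hc using 1
  rw [smul_sub, smul_smul, mul_div_cancel₀ ν hc.ne']

lemma lowerPrevAlong_smul_of_pos (hM : CoherentSDG M) (hη : η ∈ M) (hη0 : 0 ≤ η)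
    (hξ : ξ ∈ boundedBy η) {c : ℝ} (hc : 0 < c) :
    lowerPrevAlong M η (c • ξ) = c * lowerPrevAlong M η ξ := by
  refine le_antisymm ?_ (mul_le_lowerPrevAlong_smul hM hη hη0 hξ hc)
  have h := mul_le_lowerPrevAlong_smul hM hη hη0 (Submodule.smul_mem _ c hξ) (inv_pos.mpr hc)
  rw [smul_smul, inv_mul_cancel₀ hc.ne', one_smul] at h
  calc lowerPrevAlong M η (c • ξ) = c * (c⁻¹ * lowerPrevAlong M η (c • ξ)) := by
        field_simp
    _ ≤ c * lowerPrevAlong M η ξ := mul_le_mul_of_nonneg_left h hc.le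

lemma lowerPrevAlong_zero_le (hM : CoherentSDG M) (hη : η ∈ M) (hη0 : 0 ≤ η) :
    lowerPrevAlong M η 0 ≤ 0 :=
  lowerPrevAlong_le hM hη hη0 (zero_mem _) fun z => by simp

lemma lowerPrevAlong_neg (hM : CoherentSDG M) (hη : η ∈ M) (hη0 : 0 ≤ η)
    (htot : ∀ g, IsGamble g → g ∈ M ∨ -g ∈ insert 0 M) (hξ : ξ ∈ boundedBy η) :
    lowerPrevAlong M η (-ξ) = -lowerPrevAlong M η ξ := by
  refine le_antisymm ?_ (le_of_forall_lt_imp_le_of_dense fun ν hν => ?_)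
  · have h := add_le_lowerPrevAlong_add hM hη hη0 hξ (neg_mem hξ)
    rw [add_neg_cancel] at h
    linarith [lowerPrevAlong_zero_le hM hη hη0]
  · have hgamble : IsGamble (ξ + ν • η) :=
      ((hM.subset_gambles η hη).of_mem_boundedBy hξ).add ((hM.subset_gambles η hη).smul ν)
    refine (htot _ hgamble).elim (fun hmem => ?_) fun hmem =>
      le_lowerPrevAlong_of_mem_insert_zero hM hη hη0 (neg_mem hξ) (by rwa [neg_add'] at hmem)
    have := le_lowerPrevAlong hM hη0 hξ (μ := -ν) (by rwa [neg_smul, sub_neg_eq_add])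
    linarith

lemma lowerPrevAlong_add (hM : CoherentSDG M) (hη : η ∈ M) (hη0 : 0 ≤ η)
    (htot : ∀ g, IsGamble g → g ∈ M ∨ -g ∈ insert 0 M) (hξ : ξ ∈ boundedBy η)
    (hξ' : ξ' ∈ boundedBy η) :
    lowerPrevAlong M η (ξ + ξ') = lowerPrevAlong M η ξ + lowerPrevAlong M η ξ' := by
  refine le_antisymm ?_ (add_le_lowerPrevAlong_add hM hη hη0 hξ hξ')
  have h := add_le_lowerPrevAlong_add hM hη hη0 (add_mem hξ hξ') (neg_mem hξ')
  rw [add_neg_cancel_right, lowerPrevAlong_neg hM hη hη0 htot hξ'] at h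
  linarith

lemma lowerPrevAlong_smul (hM : CoherentSDG M) (hη : η ∈ M) (hη0 : 0 ≤ η)
    (htot : ∀ g, IsGamble g → g ∈ M ∨ -g ∈ insert 0 M) (hξ : ξ ∈ boundedBy η) (c : ℝ) :
    lowerPrevAlong M η (c • ξ) = c * lowerPrevAlong M η ξ := by
  rcases lt_trichotomy c 0 with hc | rfl | hc
  · rw [← neg_smul_neg, lowerPrevAlong_smul_of_pos hM hη hη0 (neg_mem hξ) (neg_pos.mpr hc),
      lowerPrevAlong_neg hM hη hη0 htot hξ, neg_mul_neg]
  · have h := lowerPrevAlong_add hM hη hη0 htot (zero_mem (boundedBy η)) (zero_mem _)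
    rw [add_zero] at h
    rw [zero_smul, zero_mul]
    linarith
  · exact lowerPrevAlong_smul_of_pos hM hη hη0 hξ hc

theorem CoherentSDG.exists_linearMap_boundedBy (hM : CoherentSDG M) (hη : η ∈ M) (hη0 : 0 ≤ η)
    (htot : ∀ g, IsGamble g → g ∈ M ∨ -g ∈ insert 0 M) :
    ∃ P : boundedBy η →ₗ[ℝ] ℝ, P ⟨η, mem_boundedBy_of_le hη0 le_rfl⟩ = 1 ∧
      ∀ ξ : boundedBy η, (ξ : Z → ℝ) ∈ insert 0 M → 0 ≤ P ξ :=
  ⟨{ toFun := fun ξ => lowerPrevAlong M η ξ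
     map_add' := fun ξ ξ' => lowerPrevAlong_add hM hη hη0 htot ξ.2 ξ'.2
     map_smul' := fun c ξ => lowerPrevAlong_smul hM hη hη0 htot ξ.2 c },
    lowerPrevAlong_self hM hη hη0, fun ξ hξ => lowerPrevAlong_nonneg hM hη hη0 ξ.2 hξ⟩

end LowerPrevAlong

section Product

variable {X1 X2 : Type*} {D1 : Set (X1 → ℝ)} {D2 : Set (X2 → ℝ)}
  {F1 : Set (Set X1)} {F2 : Set (Set X2)}

lemma CoherentSDG.mem_insert_zero_of_sum_smul_le {X ι : Type*} [Fintype ι] {D : Set (X → ℝ)}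
    (hD : CoherentSDG D) {f : X → ℝ} (hf : IsGamble f) {t : ℝ} {w : ι → ℝ} {β : ι → X → ℝ}
    (ht : 0 ≤ t) (hw : ∀ i, 0 ≤ w i) (hβ : ∀ i, 0 < w i → β i ∈ D)
    (hpos : t = 0 → ∃ i, 0 < w i) (hle : ∑ i, w i • β i ≤ t • f) : f ∈ insert 0 D := by
  have hterm : ∀ i, w i • β i ∈ insert 0 D := fun i => by
    rcases (hw i).eq_or_lt with h | h
    · simp [← h]
    · exact hD.smul_mem_insert_zero (Or.inr (hβ i h)) (hw i)
  rcases ht.eq_or_lt with rfl | ht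
  · obtain ⟨j, hj⟩ := hpos rfl
    exact absurd (hD.sum_mem (fun i _ => hterm i) (Finset.mem_univ j) (hD.d2 _ (hβ j hj) _ hj))
      (hD.d4 _ (by simpa using hle))
  · have hb := hD.sum_mem_insert_zero Finset.univ fun i _ => hterm i
    have hgap := hD.mem_insert_zero_of_nonneg
      ((hf.smul t).sub (hD.isGamble_of_mem_insert_zero hb)) (sub_nonneg.mpr hle)
    simpa [smul_smul, inv_mul_cancel₀ ht.ne'] using
      hD.smul_mem_insert_zero (hD.add_mem_insert_zero hb hgap) (inv_nonneg.mpr ht.le)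

theorem mem_insert_zero_of_forall_smul_ind_sub_mem (hD1 : CoherentSDG D1)
    (hD2 : CoherentSDG D2) {f : X1 → ℝ} (hf : IsGamble f) {B : Set X2} (hB : B.Nonempty)
    {ι : Type*} [Fintype ι] {β : ι → X1 → ℝ} {C : ι → Set X2} (hβC : ∀ i, β i ∈ D1 ∨ C i = ∅)
    (hsection : ∀ x1, f x1 • ind B - ∑ i, β i x1 • ind (C i) ∈ insert 0 D2) :
    f ∈ insert 0 D1 := by
  obtain ⟨M, hM, hD2M, htot⟩ := hD2.exists_total_superset
  set η : X2 → ℝ := ind B + ∑ i, ind (C i)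
  have hη0 : 0 ≤ η := add_nonneg (ind_nonneg B) (Finset.sum_nonneg fun i _ => ind_nonneg _)
  have hηM : η ∈ M := by
    refine hM.d1 η ((isGamble_ind B).add (isGamble_sum _ fun i _ => isGamble_ind _)) hη0 ?_
    obtain ⟨x, hx⟩ := hB
    have hηx : η x = 1 + ∑ i, ind (C i) x := by simp [η, ind_of_mem hx, Finset.sum_apply]
    refine fun h => absurd (congrFun h x) (ne_of_gt ?_)
    rw [hηx]
    exact add_pos_of_pos_of_nonneg one_pos (Finset.sum_nonneg fun i _ => ind_nonneg (C i) x)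
  obtain ⟨P, hPη, hP_nonneg⟩ := hM.exists_linearMap_boundedBy hηM hη0 htot
  let b : boundedBy η := ⟨ind B, mem_boundedBy_of_le (ind_nonneg B)
    (le_add_of_nonneg_right (Finset.sum_nonneg fun i _ => ind_nonneg _))⟩
  let c (i : ι) : boundedBy η := ⟨ind (C i), mem_boundedBy_of_le (ind_nonneg _)
    ((Finset.single_le_sum (fun j _ => ind_nonneg (C j)) (Finset.mem_univ i)).trans
      (le_add_of_nonneg_left (ind_nonneg B)))⟩
  have hP_ind : ∀ A (hA : ind A ∈ boundedBy η), 0 ≤ P ⟨ind A, hA⟩ := fun A _ =>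
    hP_nonneg _ (hM.mem_insert_zero_of_nonneg (isGamble_ind A) (ind_nonneg A))
  have hP1 : P b + ∑ i, P (c i) = 1 := by
    rw [← map_sum, ← map_add, ← hPη]
    congr 1
    ext1
    simp [b, c, η]
  have hle : ∀ x1, ∑ i, P (c i) * β i x1 ≤ P b * f x1 := fun x1 => by
    have h := hP_nonneg (f x1 • b - ∑ i, β i x1 • c i)
      (by simpa [b, c] using Set.insert_subset_insert hD2M (hsection x1))
    simp only [map_sub, map_sum, map_smul, smul_eq_mul] at h
    have hcomm : ∑ i, β i x1 * P (c i) = ∑ i, P (c i) * β i x1 :=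
      Finset.sum_congr rfl fun i _ => mul_comm _ _
    linarith [mul_comm (f x1) (P b)]
  refine hD1.mem_insert_zero_of_sum_smul_le (t := P b) (w := fun i => P (c i)) hf
    (hP_ind B b.2) (fun i => hP_ind (C i) (c i).2)
    (fun i hi => (hβC i).resolve_right fun hC => ?_) (fun ht => ?_) (fun x1 => ?_)
  · have h0 : c i = 0 := by
      ext1
      simp only [c, hC, ind, Set.indicator_empty', ZeroMemClass.coe_zero]
    rw [h0, map_zero] at hi
    exact lt_irrefl 0 hi
  · by_contra! h
    linarith [Finset.sum_nonpos fun i (_ : i ∈ Finset.univ) => h i]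
  · simpa [Finset.sum_apply] using hle x1

lemma exists_split_of_mem (hD2 : CoherentSDG D2) {h : X1 × X2 → ℝ}
    (hh : h ∈ A12 D2 F1 ∪ A21 D1 F2 ∪ Gpos (X1 × X2)) :
    ∃ (β : X1 → ℝ) (C : Set X2) (r : X1 × X2 → ℝ), (β ∈ D1 ∨ C = ∅) ∧
      (∀ x1, (fun x2 => r (x1, x2)) ∈ insert 0 D2) ∧ h = fun p => β p.1 * ind C p.2 + r p := by
  rcases hh with (⟨f2, hf2, B1, -, rfl⟩ | ⟨f1, hf1, B2, -, rfl⟩) | hpos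
  · refine ⟨0, ∅, fun p => f2 p.2 * ind B1 p.1, Or.inr rfl, fun x1 => ?_, by simp⟩
    have hsection : (fun x2 => f2 x2 * ind B1 x1) = ind B1 x1 • f2 := by
      ext; simp [mul_comm]
    rw [hsection]
    exact hD2.smul_mem_insert_zero (Or.inr hf2) (ind_nonneg B1 x1)
  · exact ⟨f1, B2, 0, Or.inl hf1, fun _ => Or.inl rfl, by simp⟩
  · exact ⟨0, ∅, h, Or.inr rfl,
      fun x1 => hD2.mem_insert_zero_of_nonneg (hpos.1.comp _) fun x2 => hpos.2.1 _, by simp⟩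

theorem mem_insert_zero_of_mul_ind_mem_indNatExt (hD1 : CoherentSDG D1) (hD2 : CoherentSDG D2)
    {f : X1 → ℝ} (hf : IsGamble f) {B : Set X2} (hB : B.Nonempty)
    (hmem : (fun p => f p.1 * ind B p.2) ∈ indNatExt D1 D2 F1 F2) : f ∈ insert 0 D1 := by
  obtain ⟨n, l, h, hl, hh, hsum⟩ := hmem
  choose β C r hβC hr hsplit using fun i => exists_split_of_mem hD2 (hh i)
  refine mem_insert_zero_of_forall_smul_ind_sub_mem hD1 hD2 hf hB (β := fun i => l i • β i)
    (fun i => (hβC i).imp_left fun hβ => hD1.d2 _ hβ _ (hl i)) fun x1 => ?_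
  have hsection : f x1 • ind B - ∑ i, (l i • β i) x1 • ind (C i)
      = ∑ i, l i • fun x2 => r i (x1, x2) := by
    ext x2
    have := congrFun hsum (x1, x2)
    simp only [hsplit, Finset.sum_apply, Pi.smul_apply, smul_eq_mul, mul_add,
      Finset.sum_add_distrib] at this
    simp only [Pi.sub_apply, Pi.smul_apply, Finset.sum_apply, smul_eq_mul, this]
    ring_nf
  rw [hsection]
  exact hD2.sum_mem_insert_zero _ fun i _ => hD2.smul_mem_insert_zero (hr i x1) (hl i).le

end Product

section LocalValues

variable {X1 X2 : Type*} {D1 : Set (X1 → ℝ)} {D2 : Set (X2 → ℝ)}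
  {F1 : Set (Set X1)} {F2 : Set (Set X2)}

lemma comp_swap_mem_indNatExt {g : X1 × X2 → ℝ} (hg : g ∈ indNatExt D1 D2 F1 F2) :
    g ∘ Prod.swap ∈ indNatExt D2 D1 F2 F1 := by
  refine posi_comp hg Prod.swap ?_
  rintro h ((⟨f2, hf2, B1, hB1, rfl⟩ | ⟨f1, hf1, B2, hB2, rfl⟩) | ⟨hh, h0, hne⟩)
  · exact Or.inl (Or.inr ⟨f2, hf2, B1, hB1, rfl⟩)
  · exact Or.inl (Or.inl ⟨f1, hf1, B2, hB2, rfl⟩)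
  · refine Or.inr ⟨hh.comp _, fun p => h0 _, fun h0' => hne ?_⟩
    ext p
    simpa using congrFun h0' p.swap

lemma comp_swap_mem_indNatExt_iff {g : X1 × X2 → ℝ} :
    g ∘ Prod.swap ∈ indNatExt D2 D1 F2 F1 ↔ g ∈ indNatExt D1 D2 F1 F2 :=
  ⟨fun h => comp_swap_mem_indNatExt h, comp_swap_mem_indNatExt⟩

lemma lpOf_indNatExt_comp_swap (g : X1 × X2 → ℝ) (B : Set (X1 × X2)) :
    lpOf (indNatExt D2 D1 F2 F1) (g ∘ Prod.swap) (Prod.swap ⁻¹' B) =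
      lpOf (indNatExt D1 D2 F1 F2) g B := by
  simp only [lpOf]
  congr 2
  ext m
  exact comp_swap_mem_indNatExt_iff (g := fun p => (g p - m) * ind B p)

lemma sSup_coe_image_eq {S T : Set ℝ} (hTS : T ⊆ S) (hST : ∀ m ∈ S, ∀ m' < m, m' ∈ T) :
    sSup (Real.toEReal '' S) = sSup (Real.toEReal '' T) := by
  refine le_antisymm (sSup_le ?_) (sSup_le_sSup (Set.image_mono hTS))
  rintro _ ⟨m, hm, rfl⟩
  refine le_of_forall_lt_imp_le_of_dense fun c hc => ?_
  obtain ⟨x, hcx, hxm⟩ := EReal.lt_iff_exists_real_btwn.mp hc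
  exact hcx.le.trans (le_sSup ⟨x, hST m hm x (EReal.coe_lt_coe_iff.mp hxm), rfl⟩)

theorem lpOf_indNatExt_fst (hD1 : CoherentSDG D1) (hD2 : CoherentSDG D2) {f : X1 → ℝ}
    (hf : IsGamble f) {B1 : Set X1} (hB1 : B1.Nonempty) {B2 : Set X2}
    (hB2F : B2 ∈ F2 ∪ {Set.univ}) (hB2 : B2.Nonempty) :
    lpOf (indNatExt D1 D2 F1 F2) (fun p => f p.1) (B1 ×ˢ B2) = lpOf D1 f B1 := by
  have hprod : ∀ m : ℝ, (fun p : X1 × X2 => (f p.1 - m) * ind (B1 ×ˢ B2) p)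
      = fun p => (fun x => (f x - m) * ind B1 x) p.1 * ind B2 p.2 := fun m => by
    ext p
    rw [ind_prod]
    ring
  refine sSup_coe_image_eq (fun m hm => ?_) fun m hm m' hm' => ?_
  · change _ ∈ indNatExt D1 D2 F1 F2
    rw [hprod]
    exact subset_posi (Or.inl (Or.inr ⟨_, hm, B2, hB2F, rfl⟩))
  · have h0 := mem_insert_zero_of_mul_ind_mem_indNatExt (f := fun x => (f x - m) * ind B1 x)
      hD1 hD2 ((hf.sub (isGamble_const m)).mul (isGamble_ind B1)) hB2 (by rw [← hprod]; exact hm)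
    have hsplit : (fun x => (f x - m') * ind B1 x)
        = (m - m') • ind B1 + fun x => (f x - m) * ind B1 x := by
      ext x
      simp only [Pi.add_apply, Pi.smul_apply, smul_eq_mul]
      ring
    change _ ∈ D1
    rw [hsplit]
    exact hD1.add_mem_of_mem_insert_zero (hD1.d1 _ ((isGamble_ind B1).smul _)
      (smul_nonneg (sub_nonneg.2 hm'.le) (ind_nonneg B1))
      (smul_ne_zero (sub_ne_zero.2 hm'.ne') (ind_ne_zero hB1))) h0

theorem lpOf_indNatExt_snd (hD1 : CoherentSDG D1) (hD2 : CoherentSDG D2) {f : X2 → ℝ}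
    (hf : IsGamble f) {B2 : Set X2} (hB2 : B2.Nonempty) {B1 : Set X1}
    (hB1F : B1 ∈ F1 ∪ {Set.univ}) (hB1 : B1.Nonempty) :
    lpOf (indNatExt D1 D2 F1 F2) (fun p => f p.2) (B1 ×ˢ B2) = lpOf D2 f B2 := by
  rw [← lpOf_indNatExt_comp_swap, Set.preimage_swap_prod]
  exact lpOf_indNatExt_fst hD2 hD1 hf hB2 hB1F hB1

lemma nonempty_of_mem_union_univ {X : Type*} [Nonempty X] {F : Set (Set X)}
    (hF : ∀ A ∈ F, A.Nonempty) {B : Set X} (hB : B ∈ F ∪ {Set.univ}) : B.Nonempty :=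
  hB.elim (hF B) fun h => (Set.mem_singleton_iff.mp h).symm ▸ Set.univ_nonempty

end LocalValues

theorem stmt11_general {X1 X2 : Type*} [Nonempty X1] [Nonempty X2]
    (C1 : Set ((X1 → ℝ) × Set X1))
    (lp1 : (X1 → ℝ) → Set X1 → EReal) (hlp1 : Coherent C1 lp1)
    (C2 : Set ((X2 → ℝ) × Set X2))
    (lp2 : (X2 → ℝ) → Set X2 → EReal) (hlp2 : Coherent C2 lp2)
    (F1 : Set (Set X1)) (F2 : Set (Set X2))
    (hF1 : ∀ A ∈ F1, A.Nonempty) (hF2 : ∀ A ∈ F2, A.Nonempty) :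
    (∀ (f1 : X1 → ℝ) (B1 : Set X1), IsGamble f1 → B1.Nonempty → ∀ B2 ∈ F2,
      lpProd C1 lp1 C2 lp2 F1 F2 (fun p => f1 p.1) (B1 ×ˢ B2) =
        lpProd C1 lp1 C2 lp2 F1 F2 (fun p => f1 p.1) (B1 ×ˢ (Set.univ : Set X2)) ∧
      lpProd C1 lp1 C2 lp2 F1 F2 (fun p => f1 p.1) (B1 ×ˢ (Set.univ : Set X2)) =
        natExtLP C1 lp1 f1 B1) ∧
    (∀ (f2 : X2 → ℝ) (B2 : Set X2), IsGamble f2 → B2.Nonempty → ∀ B1 ∈ F1,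
      lpProd C1 lp1 C2 lp2 F1 F2 (fun p => f2 p.2) (B1 ×ˢ B2) =
        lpProd C1 lp1 C2 lp2 F1 F2 (fun p => f2 p.2) ((Set.univ : Set X1) ×ˢ B2) ∧
      lpProd C1 lp1 C2 lp2 F1 F2 (fun p => f2 p.2) ((Set.univ : Set X1) ×ˢ B2) =
        natExtLP C2 lp2 f2 B2) := by
  have hD1 := coherentSDG_ElpSet hlp1
  have hD2 := coherentSDG_ElpSet hlp2
  constructor
  · intro f1 B1 hf1 hB1 B2 hB2
    have h := fun B (hB : B ∈ F2 ∪ {Set.univ}) =>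
      lpOf_indNatExt_fst (F1 := F1) hD1 hD2 hf1 hB1 hB (nonempty_of_mem_union_univ hF2 hB)
    exact ⟨(h B2 (Or.inl hB2)).trans (h _ (Or.inr rfl)).symm, h _ (Or.inr rfl)⟩
  · intro f2 B2 hf2 hB2 B1 hB1
    have h := fun B (hB : B ∈ F1 ∪ {Set.univ}) =>
      lpOf_indNatExt_snd (F2 := F2) hD1 hD2 hf2 hB2 hB (nonempty_of_mem_union_univ hF1 hB)
    exact ⟨(h B1 (Or.inl hB1)).trans (h _ (Or.inr rfl)).symm, h _ (Or.inr rfl)⟩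

/-- Proposition 12: local values of the independent natural extension
of two coherent conditional lower previsions. -/
theorem stmt11 {X1 X2 : Type*} [Nonempty X1] [Nonempty X2]
    (C1 : Set ((X1 → ℝ) × Set X1)) (hC1 : C1 ⊆ domC X1)
    (lp1 : (X1 → ℝ) → Set X1 → EReal) (hlp1 : Coherent C1 lp1)
    (C2 : Set ((X2 → ℝ) × Set X2)) (hC2 : C2 ⊆ domC X2)
    (lp2 : (X2 → ℝ) → Set X2 → EReal) (hlp2 : Coherent C2 lp2)
    (F1 : Set (Set X1)) (F2 : Set (Set X2))
    (hF1 : ∀ A ∈ F1, A.Nonempty) (hF2 : ∀ A ∈ F2, A.Nonempty) :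
    (∀ (f1 : X1 → ℝ) (B1 : Set X1), IsGamble f1 → B1.Nonempty → ∀ B2 ∈ F2,
      lpProd C1 lp1 C2 lp2 F1 F2 (fun p => f1 p.1) (B1 ×ˢ B2) =
        lpProd C1 lp1 C2 lp2 F1 F2 (fun p => f1 p.1) (B1 ×ˢ (Set.univ : Set X2)) ∧
      lpProd C1 lp1 C2 lp2 F1 F2 (fun p => f1 p.1) (B1 ×ˢ (Set.univ : Set X2)) =
        natExtLP C1 lp1 f1 B1) ∧
    (∀ (f2 : X2 → ℝ) (B2 : Set X2), IsGamble f2 → B2.Nonempty → ∀ B1 ∈ F1,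
      lpProd C1 lp1 C2 lp2 F1 F2 (fun p => f2 p.2) (B1 ×ˢ B2) =
        lpProd C1 lp1 C2 lp2 F1 F2 (fun p => f2 p.2) ((Set.univ : Set X1) ×ˢ B2) ∧
      lpProd C1 lp1 C2 lp2 F1 F2 (fun p => f2 p.2) ((Set.univ : Set X1) ×ˢ B2) =
        natExtLP C2 lp2 f2 B2) :=
  stmt11_general C1 lp1 hlp1 C2 lp2 hlp2 F1 F2 hF1 hF2

end IPaper
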